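/- For all positive integers m and n: (-1)^m ∑_{n ≥ k_1 > ⋯ > k_m ≥ 1} ∏_{j=1}^m 1/k_j = ∑_{n ≥ k_1 > ⋯ > k_m ≥ 1} (-1)^{k_1} C(n,k_1) ∏_{j=1}^m 1/k_j. -/
import Mathlib

/-- `∑_{n ≥ k₁ > ⋯ > k_m ≥ 1} ∏_j 1/k_j`. -/
noncomputable def strictInv : ℕ → ℕ → ℝ
  | _, 0 => 1
  | n, m + 1 => ∑ k ∈ Finset.Icc 1 n, (1 / (k : ℝ)) * strictInv (k - 1) m

/-- `∑_{n ≥ k₁ > ⋯ > k_m ≥ 1} (-1)^{k₁} C(n,k₁) ∏_j 1/k_j`. -/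
noncomputable def strictAlt (n : ℕ) : ℕ → ℝ
  | 0 => 1
  | m + 1 => ∑ k ∈ Finset.Icc 1 n,
      (-1 : ℝ) ^ k * (n.choose k : ℝ) * (1 / (k : ℝ)) * strictInv (k - 1) m

lemma partialAlt (n j : ℕ) (hn : 1 ≤ n) :
    ∑ k ∈ Finset.range (j + 1), (-1 : ℝ) ^ k * (n.choose k : ℝ)
      = (-1) ^ j * ((n - 1).choose j : ℝ) := by
  obtain ⟨n, rfl⟩ : ∃ n', n = n' + 1 := ⟨n - 1, by omega⟩
  induction j with
  | zero => simp
  | succ j ih =>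
    rw [Finset.sum_range_succ, ih]
    simp only [Nat.add_sub_cancel]
    rw [Nat.choose_succ_succ]
    push_cast
    ring

lemma fullAlt (n : ℕ) (hn : 1 ≤ n) :
    ∑ k ∈ Finset.range (n + 1), (-1 : ℝ) ^ k * (n.choose k : ℝ) = 0 := by
  have h := Int.alternating_sum_range_choose (n := n)
  rw [if_neg (by omega)] at h
  exact_mod_cast congrArg (Int.cast : ℤ → ℝ) h

lemma tailAlt (n j : ℕ) (hn : 1 ≤ n) (hj : j ≤ n) :
    ∑ k ∈ Finset.Icc (j + 1) n, (-1 : ℝ) ^ k * (n.choose k : ℝ)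
      = -((-1) ^ j * ((n - 1).choose j : ℝ)) := by
  rw [← Finset.Ico_add_one_right_eq_Icc, Finset.sum_Ico_eq_sub _ (by omega),
    fullAlt n hn, partialAlt n j hn]
  ring

lemma keyL (r n : ℕ) (hn : 1 ≤ n)
    (H : ∀ n, strictAlt n r = (-1 : ℝ) ^ r * strictInv n r) :
    ∑ k ∈ Finset.Icc 1 n, (-1 : ℝ) ^ k * (n.choose k : ℝ) * strictInv (k - 1) r
      = (-1) ^ (r + 1) * strictInv (n - 1) r := by
  cases r with
  | zero =>
    have h := tailAlt n 0 hn (Nat.zero_le n)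
    simp only [strictInv, pow_zero, one_mul, Nat.choose_zero_right, Nat.cast_one,
      mul_one, zero_add, pow_one] at *
    linarith [h]
  | succ s =>
    have unfold1 : ∀ k, strictInv (k - 1) (s + 1)
        = ∑ j ∈ Finset.Icc 1 (k - 1), (1 / (j : ℝ)) * strictInv (j - 1) s := fun k => rfl
    -- rewrite inner Icc as filtered sum over Icc 1 n
    have step1 : ∑ k ∈ Finset.Icc 1 n, (-1 : ℝ) ^ k * (n.choose k : ℝ) * strictInv (k - 1) (s + 1)
        = ∑ k ∈ Finset.Icc 1 n, ∑ j ∈ Finset.Icc 1 n,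
            (if j < k then (-1 : ℝ) ^ k * (n.choose k : ℝ) * ((1 / (j : ℝ)) * strictInv (j - 1) s) else 0) := by
      refine Finset.sum_congr rfl fun k hk => ?_
      simp only [Finset.mem_Icc] at hk
      rw [unfold1, Finset.mul_sum]
      rw [← Finset.sum_filter]
      congr 1
      ext a
      simp only [Finset.mem_filter, Finset.mem_Icc]
      omega
    rw [step1, Finset.sum_comm]
    have step2 : ∀ j ∈ Finset.Icc 1 n,
        (∑ k ∈ Finset.Icc 1 n,
          if j < k then (-1 : ℝ) ^ k * (n.choose k : ℝ) * ((1 / (j : ℝ)) * strictInv (j - 1) s) else 0)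
        = -((-1 : ℝ) ^ j * (((n-1).choose j : ℝ))) * ((1 / (j : ℝ)) * strictInv (j - 1) s) := by
      intro j hj
      simp only [Finset.mem_Icc] at hj
      rw [← Finset.sum_filter]
      have hfil : Finset.filter (fun k => j < k) (Finset.Icc 1 n) = Finset.Icc (j+1) n := by
        ext a; simp only [Finset.mem_filter, Finset.mem_Icc]; omega
      rw [hfil, ← Finset.sum_mul, tailAlt n j hn hj.2]
    rw [Finset.sum_congr rfl step2]
    have drop : ∑ j ∈ Finset.Icc 1 n, -((-1 : ℝ) ^ j * (((n-1).choose j : ℝ))) * ((1 / (j : ℝ)) * strictInv (j - 1) s)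
        = ∑ j ∈ Finset.Icc 1 (n-1), -((-1 : ℝ) ^ j * (((n-1).choose j : ℝ))) * ((1 / (j : ℝ)) * strictInv (j - 1) s) := by
      symm
      apply Finset.sum_subset
      · apply Finset.Icc_subset_Icc_right; omega
      · intro x hx hnx
        simp only [Finset.mem_Icc] at hx hnx
        have : x = n := by omega
        subst this
        rw [Nat.choose_eq_zero_of_lt (by omega)]
        simp
    rw [drop]
    have : ∑ j ∈ Finset.Icc 1 (n-1), -((-1 : ℝ) ^ j * (((n-1).choose j : ℝ))) * ((1 / (j : ℝ)) * strictInv (j - 1) s)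
        = -strictAlt (n-1) (s+1) := by
      rw [show strictAlt (n-1) (s+1) = ∑ k ∈ Finset.Icc 1 (n-1),
        (-1 : ℝ) ^ k * ((n-1).choose k : ℝ) * (1 / (k : ℝ)) * strictInv (k - 1) s from rfl,
        ← Finset.sum_neg_distrib]
      exact Finset.sum_congr rfl fun j hj => by ring
    rw [this, H (n-1)]
    ring

lemma mainAll : ∀ m n, strictAlt n m = (-1 : ℝ) ^ m * strictInv n m := by
  intro m
  induction m with
  | zero => intro n; simp [strictAlt, strictInv]
  | succ m ih =>
    intro n
    induction n with
    | zero => simp [strictAlt, strictInv]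
    | succ n ihn =>
      have expand : strictAlt (n+1) (m+1) = strictAlt n (m+1)
          + (1 / ((n:ℝ)+1)) * ((-1 : ℝ) ^ (m + 1) * strictInv n m) := by
        have pascal : ∀ k ∈ Finset.Icc 1 (n+1),
            (-1 : ℝ) ^ k * ((n+1).choose k : ℝ) * (1 / (k : ℝ)) * strictInv (k - 1) m
            = (-1 : ℝ) ^ k * ((n).choose k : ℝ) * (1 / (k : ℝ)) * strictInv (k - 1) m
              + (1 / ((n:ℝ)+1)) * ((-1 : ℝ) ^ k * (((n+1).choose k : ℝ)) * strictInv (k - 1) m) := by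
          intro k hk
          simp only [Finset.mem_Icc] at hk
          obtain ⟨k, rfl⟩ : ∃ k', k = k' + 1 := ⟨k - 1, by omega⟩
          have hc : ((n:ℝ)+1) * (n.choose k : ℝ) = ((n+1).choose (k+1) : ℝ) * ((k:ℝ)+1) := by
            exact_mod_cast congrArg (Nat.cast : ℕ → ℝ) (Nat.add_one_mul_choose_eq n k)
          have h1 : (n.choose k : ℝ) * (1 / ((k:ℝ)+1))
              = (1 / ((n:ℝ)+1)) * ((n+1).choose (k+1) : ℝ) := by
            field_simp
            linarith [hc]
          push_cast [Nat.choose_succ_succ] at h1 ⊢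
          linear_combination ((-1:ℝ)^(k+1) * strictInv k m) * h1
        calc strictAlt (n+1) (m+1)
            = ∑ k ∈ Finset.Icc 1 (n+1),
              ((-1 : ℝ) ^ k * ((n).choose k : ℝ) * (1 / (k : ℝ)) * strictInv (k - 1) m
              + (1 / ((n:ℝ)+1)) * ((-1 : ℝ) ^ k * (((n+1).choose k : ℝ)) * strictInv (k - 1) m)) := by
              rw [show strictAlt (n+1) (m+1) = ∑ k ∈ Finset.Icc 1 (n+1),
                (-1 : ℝ) ^ k * ((n+1).choose k : ℝ) * (1 / (k : ℝ)) * strictInv (k - 1) m from rfl]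
              exact Finset.sum_congr rfl pascal
          _ = (∑ k ∈ Finset.Icc 1 (n+1),
                (-1 : ℝ) ^ k * ((n).choose k : ℝ) * (1 / (k : ℝ)) * strictInv (k - 1) m)
              + (1 / ((n:ℝ)+1)) * ∑ k ∈ Finset.Icc 1 (n+1),
                (-1 : ℝ) ^ k * (((n+1).choose k : ℝ)) * strictInv (k - 1) m := by
              rw [Finset.sum_add_distrib, Finset.mul_sum]
          _ = strictAlt n (m+1)
              + (1 / ((n:ℝ)+1)) * ((-1 : ℝ) ^ (m + 1) * strictInv n m) := by
              congr 1
              · rw [Finset.sum_Icc_succ_top (by omega),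
                  Nat.choose_eq_zero_of_lt (by omega)]
                simp [strictAlt]
              · rw [keyL m (n+1) (by omega) ih]
                simp
      have expand2 : strictInv (n+1) (m+1)
          = strictInv n (m+1) + (1 / ((n:ℝ)+1)) * strictInv n m := by
        rw [show strictInv (n+1) (m+1) = ∑ k ∈ Finset.Icc 1 (n+1),
          (1 / (k : ℝ)) * strictInv (k - 1) m from rfl,
          Finset.sum_Icc_succ_top (by omega)]
        push_cast
        rfl
      rw [expand, expand2, ihn]
      ring

theorem strict_duality_limit (m n : ℕ) (hm : 0 < m) (hn : 0 < n) :
    (-1 : ℝ) ^ m * strictInv n m = strictAlt n m := by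
  exact (mainAll m n).symm
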